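/- Let d ≥ 1, let U, V: P₂(ℝ^d) → ℝ be d₁-Lipschitz with respective constants L_U and L_V, and fix ε, δ > 0. If (μ̄, ν̄) ∈ P₂(ℝ^d) × P₂(ℝ^d) maximizes the functional Φ(μ, ν) := U(μ) − V(ν) − (1/(2ε)) d₂²(μ, ν) − δE*(μ) − δE*(ν), then d₂(μ̄, ν̄) ≤ 2(L_U + L_V) ε. -/

import Mathlib

open MeasureTheory Filter Set Classical
open scoped ENNReal Topology

noncomputable section

/-- Euclidean space `ℝ^d`. -/
abbrev Ed (d : ℕ) := EuclideanSpace ℝ (Fin d)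

/-- Density of a measure with respect to Lebesgue measure. -/
def dens {d : ℕ} (μ : Measure (Ed d)) (x : Ed d) : ℝ :=
  (μ.rnDeriv volume x).toReal

/-- The integrand `μ(x) log μ(x)` of the entropy. -/
def entIntegrand {d : ℕ} (μ : Measure (Ed d)) (x : Ed d) : ℝ :=
  dens μ x * Real.log (dens μ x)

/-- The entropy `E(μ) ∈ (−∞, +∞]`. -/
def entropy {d : ℕ} (μ : Measure (Ed d)) : EReal :=
  if μ ≪ (volume : Measure (Ed d)) then
    ((∫⁻ x, ENNReal.ofReal (entIntegrand μ x) : ℝ≥0∞) : EReal)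
      - ((∫ x, max (-(entIntegrand μ x)) 0 : ℝ) : EReal)
  else ⊤

/-- The set of couplings of `μ` and `ν`. -/
def couplings {d : ℕ} (μ ν : Measure (Ed d)) : Set (Measure (Ed d × Ed d)) :=
  {γ | IsProbabilityMeasure γ ∧ γ.map Prod.fst = μ ∧ γ.map Prod.snd = ν}

/-- The `1`-Wasserstein distance. -/
def W1 {d : ℕ} (μ ν : Measure (Ed d)) : ℝ :=
  sInf ((fun γ => ∫ z, ‖z.1 - z.2‖ ∂γ) '' couplings μ ν)

/-- The `2`-Wasserstein distance. -/
def W2 {d : ℕ} (μ ν : Measure (Ed d)) : ℝ :=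
  Real.sqrt (sInf ((fun γ => ∫ z, ‖z.1 - z.2‖ ^ 2 ∂γ) '' couplings μ ν))

/-- Membership in `P₂(ℝ^d)`: a Borel probability measure with finite second moment. -/
def MemP2 {d : ℕ} (μ : Measure (Ed d)) : Prop :=
  IsProbabilityMeasure μ ∧ Integrable (fun x => ‖x‖ ^ 2) μ

/-- The penalized entropy `E*(μ) = E(μ) + π ∫ |x|² dμ ∈ (−∞, +∞]`. -/
def pent {d : ℕ} (μ : Measure (Ed d)) : EReal :=
  entropy μ + ((Real.pi * (∫ x, ‖x‖ ^ 2 ∂μ) : ℝ) : EReal)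

/-- The doubling-of-variables functional
`Φ(μ, ν) = U(μ) − V(ν) − (1/(2ε)) d₂²(μ, ν) − δE*(μ) − δE*(ν)`. -/
def Phi {d : ℕ} (U V : Measure (Ed d) → ℝ) (ε δ : ℝ) (μ ν : Measure (Ed d)) : EReal :=
  ((U μ : ℝ) : EReal) - ((V ν : ℝ) : EReal)
    - (((1 / (2 * ε)) * W2 μ ν ^ 2 : ℝ) : EReal)
    - ((δ : ℝ) : EReal) * pent μ - ((δ : ℝ) : EReal) * pent ν

lemma prod_mem_couplings {d : ℕ} (μ ν : Measure (Ed d))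
    [IsProbabilityMeasure μ] [IsProbabilityMeasure ν] : μ.prod ν ∈ couplings μ ν := by
  refine ⟨inferInstance, ?_, ?_⟩ <;> simp

lemma diag_mem_couplings {d : ℕ} (μ : Measure (Ed d)) [IsProbabilityMeasure μ] :
    μ.map (fun x => (x, x)) ∈ couplings μ μ := by
  constructor
  · exact Measure.isProbabilityMeasure_map (measurable_id.prodMk measurable_id).aemeasurable
  constructor <;>
  · rw [Measure.map_map (by measurability) (by measurability)]
    exact Measure.map_id'

lemma diag_integral_zero {d : ℕ} (μ : Measure (Ed d)) [IsProbabilityMeasure μ] (k : ℕ) (hk : k ≠ 0) :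
    ∫ z : Ed d × Ed d, ‖z.1 - z.2‖ ^ k ∂(μ.map (fun x => (x, x))) = 0 := by
  rw [integral_map (by measurability)
    ((by measurability : Measurable fun z : Ed d × Ed d => ‖z.1 - z.2‖ ^ k)).aestronglyMeasurable]
  simp [hk]

lemma bddBelow_int {d : ℕ} (μ ν : Measure (Ed d)) (f : Measure (Ed d × Ed d) → ℝ)
    (hf : ∀ γ, 0 ≤ f γ) : BddBelow (f '' couplings μ ν) :=
  ⟨0, by rintro t ⟨γ, -, rfl⟩; exact hf γ⟩

lemma W1_nonneg {d : ℕ} (μ ν : Measure (Ed d)) [IsProbabilityMeasure μ]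
    [IsProbabilityMeasure ν] : 0 ≤ W1 μ ν := by
  refine le_csInf ⟨_, Set.mem_image_of_mem _ (prod_mem_couplings μ ν)⟩ ?_
  rintro t ⟨γ, -, rfl⟩
  exact integral_nonneg (fun z => norm_nonneg _)

lemma W2_self {d : ℕ} (μ : Measure (Ed d)) [IsProbabilityMeasure μ] : W2 μ μ = 0 := by
  have h0 : (0:ℝ) ∈ (fun γ => ∫ z, ‖z.1 - z.2‖ ^ 2 ∂γ) '' couplings μ μ :=
    ⟨_, diag_mem_couplings μ, diag_integral_zero μ 2 two_ne_zero⟩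
  rw [W2, le_antisymm (csInf_le (bddBelow_int _ _ _ fun γ => integral_nonneg fun z => by positivity) h0)
    (le_csInf ⟨_, h0⟩ (by rintro t ⟨γ, -, rfl⟩; exact integral_nonneg fun z => by positivity)),
    Real.sqrt_zero]

lemma W2_nonneg {d : ℕ} (μ ν : Measure (Ed d)) : 0 ≤ W2 μ ν := Real.sqrt_nonneg _

lemma W1_le_W2 {d : ℕ} (μ ν : Measure (Ed d)) (hμ : MemP2 μ) (hν : MemP2 ν) :
    W1 μ ν ≤ W2 μ ν := by
  have := hμ.1; have := hν.1
  rw [W2, ← Real.sqrt_sq (W1_nonneg μ ν)]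
  apply Real.sqrt_le_sqrt
  refine le_csInf ⟨_, Set.mem_image_of_mem _ (prod_mem_couplings μ ν)⟩ ?_
  rintro t ⟨γ, hγ, rfl⟩
  have hpγ : IsProbabilityMeasure γ := hγ.1
  have hi1 : Integrable (fun z : Ed d × Ed d => ‖z.1‖ ^ 2) γ := by
    have h := hμ.2; rw [← hγ.2.1] at h
    exact (integrable_map_measure
      ((by measurability : Measurable fun x : Ed d => ‖x‖ ^ 2)).aestronglyMeasurable
      measurable_fst.aemeasurable).mp h
  have hi2 : Integrable (fun z : Ed d × Ed d => ‖z.2‖ ^ 2) γ := by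
    have h := hν.2; rw [← hγ.2.2] at h
    exact (integrable_map_measure
      ((by measurability : Measurable fun x : Ed d => ‖x‖ ^ 2)).aestronglyMeasurable
      measurable_snd.aemeasurable).mp h
  have hisq : Integrable (fun z : Ed d × Ed d => ‖z.1 - z.2‖ ^ 2) γ := by
    refine Integrable.mono' (((hi1.add hi2)).const_mul 2)
      ((by measurability : Measurable fun z : Ed d × Ed d => ‖z.1 - z.2‖ ^ 2)).aestronglyMeasurable ?_
    filter_upwards with z
    rw [Real.norm_of_nonneg (by positivity)]
    simp only [Pi.add_apply]
    have h := norm_sub_le z.1 z.2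
    nlinarith [norm_nonneg z.1, norm_nonneg z.2, norm_nonneg (z.1 - z.2),
      sq_nonneg (‖z.1‖ - ‖z.2‖), mul_self_le_mul_self (norm_nonneg (z.1 - z.2)) h]
  -- W1 ≤ ∫ ‖z.1 - z.2‖ dγ ≤ sqrt (∫ ‖z.1 - z.2‖² dγ)
  have hW1le : W1 μ ν ≤ ∫ z, ‖z.1 - z.2‖ ∂γ :=
    csInf_le (bddBelow_int _ _ _ fun γ' => integral_nonneg fun z => norm_nonneg _)
      (Set.mem_image_of_mem _ hγ)
  have hCS : ∫ z, ‖z.1 - z.2‖ ∂γ ≤ Real.sqrt (∫ z, ‖z.1 - z.2‖ ^ 2 ∂γ) := by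
    have hconj : Real.HolderConjugate 2 2 := Real.holderConjugate_iff.mpr ⟨one_lt_two, by norm_num⟩
    have hf2 : MemLp (fun z : Ed d × Ed d => ‖z.1 - z.2‖) 2 γ :=
      (memLp_two_iff_integrable_sq
        ((by measurability : Measurable fun z : Ed d × Ed d => ‖z.1 - z.2‖)).aestronglyMeasurable).mpr
        hisq
    have hg2 : MemLp (fun _ : Ed d × Ed d => (1:ℝ)) 2 γ := memLp_const 1
    have h := integral_mul_le_Lp_mul_Lq_of_nonneg hconj
      (Filter.Eventually.of_forall fun z => norm_nonneg _)
      (Filter.Eventually.of_forall fun _ => zero_le_one)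
      (by simpa using hf2) (by simpa using hg2)
    simp only [mul_one] at h
    calc ∫ z, ‖z.1 - z.2‖ ∂γ ≤ (∫ z, ‖z.1 - z.2‖ ^ (2:ℝ) ∂γ) ^ ((1:ℝ)/2)
            * (∫ _, (1:ℝ) ^ (2:ℝ) ∂γ) ^ ((1:ℝ)/2) := h
      _ = Real.sqrt (∫ z, ‖z.1 - z.2‖ ^ 2 ∂γ) := by
          simp only [Real.rpow_two, Real.one_rpow, integral_const, measure_univ,
            ENNReal.toReal_one, one_smul, mul_one, Real.sqrt_eq_rpow]
          norm_num
  have h2 : 0 ≤ ∫ z, ‖z.1 - z.2‖ ^ 2 ∂γ := integral_nonneg fun z => by positivity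
  calc W1 μ ν ^ 2 ≤ Real.sqrt (∫ z, ‖z.1 - z.2‖ ^ 2 ∂γ) ^ 2 :=
        pow_le_pow_left₀ (W1_nonneg μ ν) (hW1le.trans hCS) 2
    _ = _ := Real.sq_sqrt h2

lemma memP2_dirac {d : ℕ} (v : Ed d) : MemP2 (Measure.dirac v) :=
  ⟨inferInstance, (integrable_const (‖v‖ ^ 2)).congr (ae_eq_dirac fun x => ‖x‖ ^ 2).symm⟩

lemma W1_dirac {d : ℕ} (v : Ed d) : W1 (Measure.dirac (0 : Ed d)) (Measure.dirac v) = ‖v‖ := by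
  have key : ∀ γ ∈ couplings (Measure.dirac (0 : Ed d)) (Measure.dirac v),
      ∫ z : Ed d × Ed d, ‖z.1 - z.2‖ ∂γ = ‖v‖ := by
    intro γ hγ
    have hpγ : IsProbabilityMeasure γ := hγ.1
    have h1 : ∀ᵐ z : Ed d × Ed d ∂γ, z.1 = 0 := by
      rw [ae_iff]
      have : {z : Ed d × Ed d | ¬z.1 = 0} = Prod.fst ⁻¹' {(0:Ed d)}ᶜ := rfl
      rw [this, ← Measure.map_apply measurable_fst (measurableSet_singleton _).compl, hγ.2.1,
        Measure.dirac_apply' _ (measurableSet_singleton _).compl]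
      simp
    have h2 : ∀ᵐ z : Ed d × Ed d ∂γ, z.2 = v := by
      rw [ae_iff]
      have : {z : Ed d × Ed d | ¬z.2 = v} = Prod.snd ⁻¹' {v}ᶜ := rfl
      rw [this, ← Measure.map_apply measurable_snd (measurableSet_singleton _).compl, hγ.2.2,
        Measure.dirac_apply' _ (measurableSet_singleton _).compl]
      simp
    have : (fun z : Ed d × Ed d => ‖z.1 - z.2‖) =ᵐ[γ] fun _ => ‖v‖ := by
      filter_upwards [h1, h2] with z hz1 hz2
      rw [hz1, hz2]; simp
    rw [integral_congr_ae this]; simp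
  have hne : ((fun γ => ∫ z : Ed d × Ed d, ‖z.1 - z.2‖ ∂γ) '' couplings (Measure.dirac (0:Ed d)) (Measure.dirac v)).Nonempty :=
    ⟨_, Set.mem_image_of_mem _ (prod_mem_couplings _ _)⟩
  rw [W1]
  obtain ⟨t0, γ0, hγ0, rfl⟩ := hne
  have heq : (fun γ => ∫ z : Ed d × Ed d, ‖z.1 - z.2‖ ∂γ) '' couplings (Measure.dirac (0:Ed d)) (Measure.dirac v) = {‖v‖} := by
    apply Set.eq_singleton_iff_unique_mem.mpr
    refine ⟨?_, ?_⟩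
    · rw [← key γ0 hγ0]; exact Set.mem_image_of_mem _ hγ0
    · rintro t ⟨γ, hγ, rfl⟩; exact key γ hγ
  rw [heq, csInf_singleton]

lemma entropy_ne_bot {d : ℕ} (μ : Measure (Ed d)) : entropy μ ≠ ⊥ := by
  rw [entropy]
  split_ifs with h
  · rw [sub_eq_add_neg, ← EReal.coe_neg, Ne, EReal.add_eq_bot_iff]
    push_neg
    exact ⟨EReal.coe_ennreal_ne_bot _, EReal.coe_ne_bot _⟩
  · simp

lemma pent_ne_bot {d : ℕ} (μ : Measure (Ed d)) : pent μ ≠ ⊥ := by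
  rw [pent, Ne, EReal.add_eq_bot_iff]
  push_neg
  exact ⟨entropy_ne_bot μ, EReal.coe_ne_bot _⟩

-- the unit cube
def cube (d : ℕ) : Set (Ed d) :=
  (MeasurableEquiv.toLp 2 (Fin d → ℝ)).symm ⁻¹' (Set.univ.pi fun _ : Fin d => Icc (0:ℝ) 1)

lemma cube_measurable (d : ℕ) : MeasurableSet (cube d) :=
  (MeasurableEquiv.toLp 2 (Fin d → ℝ)).symm.measurable
    (MeasurableSet.univ_pi fun _ => measurableSet_Icc)

lemma volume_cube (d : ℕ) : volume (cube d) = 1 := by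
  rw [cube, MeasurePreserving.measure_preimage (EuclideanSpace.volume_preserving_symm_measurableEquiv_toLp (Fin d))
    (MeasurableSet.univ_pi fun _ => measurableSet_Icc).nullMeasurableSet]
  rw [volume_pi_pi]
  simp

def cubeMeas (d : ℕ) : Measure (Ed d) := volume.restrict (cube d)

lemma cubeMeas_prob (d : ℕ) : IsProbabilityMeasure (cubeMeas d) :=
  ⟨by rw [cubeMeas, Measure.restrict_apply_univ]; exact volume_cube d⟩

lemma memP2_cubeMeas (d : ℕ) : MemP2 (cubeMeas d) := by
  refine ⟨cubeMeas_prob d, ?_⟩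
  have : IsProbabilityMeasure (cubeMeas d) := cubeMeas_prob d
  refine Integrable.mono' (integrable_const (d : ℝ))
    ((by measurability : Measurable fun x : Ed d => ‖x‖ ^ 2)).aestronglyMeasurable ?_
  rw [cubeMeas, ae_restrict_iff' (cube_measurable d)]
  filter_upwards with x hx
  rw [Real.norm_of_nonneg (by positivity), EuclideanSpace.norm_eq,
    Real.sq_sqrt (Finset.sum_nonneg fun i _ => by positivity)]
  have hx' : ∀ i, x i ∈ Icc (0:ℝ) 1 := by
    intro i
    exact hx i (Set.mem_univ i)
  calc ∑ i, ‖x i‖ ^ 2 ≤ ∑ _i : Fin d, (1:ℝ) := by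
        refine Finset.sum_le_sum fun i _ => ?_
        have := hx' i
        rw [Real.norm_of_nonneg this.1]
        nlinarith [this.1, this.2]
    _ = d := by simp

lemma entIntegrand_cubeMeas_ae (d : ℕ) :
    (fun x => entIntegrand (cubeMeas d) x) =ᵐ[volume] fun _ => (0:ℝ) := by
  have h := Measure.rnDeriv_restrict_self (volume : Measure (Ed d)) (cube_measurable d)
  filter_upwards [h] with x hx
  simp only [entIntegrand, dens, cubeMeas, hx]
  by_cases hxc : x ∈ cube d
  · simp [Set.indicator_of_mem hxc]
  · simp [Set.indicator_of_notMem hxc]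

lemma entropy_cubeMeas (d : ℕ) : entropy (cubeMeas d) = 0 := by
  have hac : cubeMeas d ≪ (volume : Measure (Ed d)) :=
    Measure.absolutelyContinuous_of_le Measure.restrict_le_self
  rw [entropy, if_pos hac]
  have h1 : (∫⁻ x, ENNReal.ofReal (entIntegrand (cubeMeas d) x) : ℝ≥0∞) = 0 := by
    have he : (fun x => ENNReal.ofReal (entIntegrand (cubeMeas d) x)) =ᵐ[(volume : Measure (Ed d))]
        (fun _ => (0:ℝ≥0∞)) :=
      (entIntegrand_cubeMeas_ae d).mono fun x hx => by simp only at hx; simp [hx]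
    rw [lintegral_congr_ae he]
    simp
  have h2 : (∫ x, max (-(entIntegrand (cubeMeas d) x)) 0 : ℝ) = 0 := by
    have he : (fun x => max (-(entIntegrand (cubeMeas d) x)) 0) =ᵐ[(volume : Measure (Ed d))]
        (fun _ => (0:ℝ)) :=
      (entIntegrand_cubeMeas_ae d).mono fun x hx => by simp only at hx; simp [hx]
    rw [integral_congr_ae he]
    simp
  rw [h1, h2]
  simp

lemma pent_cubeMeas (d : ℕ) :
    pent (cubeMeas d) = ((Real.pi * (∫ x, ‖x‖ ^ 2 ∂(cubeMeas d)) : ℝ) : EReal) := by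
  rw [pent, entropy_cubeMeas, zero_add]

/-- If `(μ̄, ν̄)` maximizes `Φ` over `P₂ × P₂`, where `U, V` are `d₁`-Lipschitz with
constants `L_U, L_V`, then `d₂(μ̄, ν̄) ≤ 2(L_U + L_V)ε`. -/
theorem stmt9 (d : ℕ) (hd : 1 ≤ d) (U V : Measure (Ed d) → ℝ) (LU LV : ℝ)
    (hU : ∀ μ ν : Measure (Ed d), MemP2 μ → MemP2 ν → |U μ - U ν| ≤ LU * W1 μ ν)
    (hV : ∀ μ ν : Measure (Ed d), MemP2 μ → MemP2 ν → |V μ - V ν| ≤ LV * W1 μ ν)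
    (ε δ : ℝ) (hε : 0 < ε) (hδ : 0 < δ)
    (μb νb : Measure (Ed d)) (hμb : MemP2 μb) (hνb : MemP2 νb)
    (hmax : ∀ μ ν : Measure (Ed d), MemP2 μ → MemP2 ν →
      Phi U V ε δ μ ν ≤ Phi U V ε δ μb νb) :
    W2 μb νb ≤ 2 * (LU + LV) * ε := by
  haveI : IsProbabilityMeasure μb := hμb.1
  haveI : IsProbabilityMeasure νb := hνb.1
  haveI : IsProbabilityMeasure (cubeMeas d) := cubeMeas_prob d
  -- Step 1 : the value at the maximum is not ⊥
  have e0 : Phi U V ε δ (cubeMeas d) (cubeMeas d)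
      = ((U (cubeMeas d) - V (cubeMeas d)
          - (1 / (2 * ε)) * W2 (cubeMeas d) (cubeMeas d) ^ 2
          - δ * (Real.pi * ∫ x, ‖x‖ ^ 2 ∂(cubeMeas d))
          - δ * (Real.pi * ∫ x, ‖x‖ ^ 2 ∂(cubeMeas d)) : ℝ) : EReal) := by
    rw [Phi, pent_cubeMeas]
    norm_cast
  have hΦnb : Phi U V ε δ μb νb ≠ ⊥ := by
    intro h
    have i0 := hmax _ _ (memP2_cubeMeas d) (memP2_cubeMeas d)
    rw [e0, h, le_bot_iff] at i0
    exact EReal.coe_ne_bot _ i0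
  -- Step 2 : pent μb and pent νb are finite
  have hpμT : pent μb ≠ ⊤ := by
    intro hT
    apply hΦnb
    rw [Phi, hT, EReal.coe_mul_top_of_pos hδ, EReal.sub_top, EReal.bot_sub]
  have hpνT : pent νb ≠ ⊤ := by
    intro hT
    apply hΦnb
    rw [Phi, hT, EReal.coe_mul_top_of_pos hδ, EReal.sub_top]
  set a := (pent μb).toReal with ha_def
  set b := (pent νb).toReal with hb_def
  have ha : ((a : ℝ) : EReal) = pent μb := EReal.coe_toReal hpμT (pent_ne_bot μb)
  have hb : ((b : ℝ) : EReal) = pent νb := EReal.coe_toReal hpνT (pent_ne_bot νb)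
  -- Step 3 : express the three relevant values of Phi as real numbers
  set w := W2 μb νb with hw_def
  have hwμ : W2 μb μb = 0 := W2_self μb
  have hwν : W2 νb νb = 0 := W2_self νb
  have eb : Phi U V ε δ μb νb
      = ((U μb - V νb - (1 / (2 * ε)) * w ^ 2 - δ * a - δ * b : ℝ) : EReal) := by
    rw [Phi, ← ha, ← hb]; norm_cast
  have e1 : Phi U V ε δ μb μb
      = ((U μb - V μb - (1 / (2 * ε)) * W2 μb μb ^ 2 - δ * a - δ * a : ℝ) : EReal) := by
    rw [Phi, ← ha]; norm_cast
  have e2 : Phi U V ε δ νb νb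
      = ((U νb - V νb - (1 / (2 * ε)) * W2 νb νb ^ 2 - δ * b - δ * b : ℝ) : EReal) := by
    rw [Phi, ← hb]; norm_cast
  have i1 : U μb - V μb - (1 / (2 * ε)) * W2 μb μb ^ 2 - δ * a - δ * a
      ≤ U μb - V νb - (1 / (2 * ε)) * w ^ 2 - δ * a - δ * b := by
    have := hmax μb μb hμb hμb
    rw [e1, eb] at this
    exact_mod_cast this
  have i2 : U νb - V νb - (1 / (2 * ε)) * W2 νb νb ^ 2 - δ * b - δ * b
      ≤ U μb - V νb - (1 / (2 * ε)) * w ^ 2 - δ * a - δ * b := by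
    have := hmax νb νb hνb hνb
    rw [e2, eb] at this
    exact_mod_cast this
  rw [hwμ] at i1
  rw [hwν] at i2
  -- Step 4 : Lipschitz bounds and sign of the constants
  have hULip : U μb - U νb ≤ LU * W1 μb νb := le_trans (le_abs_self _) (hU μb νb hμb hνb)
  have hVLip : V μb - V νb ≤ LV * W1 μb νb := le_trans (le_abs_self _) (hV μb νb hμb hνb)
  set v : Ed d := EuclideanSpace.single (⟨0, hd⟩ : Fin d) (1 : ℝ) with hv_def
  have hvW : W1 (Measure.dirac (0 : Ed d)) (Measure.dirac v) = 1 := by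
    rw [W1_dirac, hv_def, EuclideanSpace.norm_single]
    simp
  have hLU : 0 ≤ LU := by
    have h := hU _ _ (memP2_dirac (0 : Ed d)) (memP2_dirac v)
    rw [hvW, mul_one] at h
    exact le_trans (abs_nonneg _) h
  have hLV : 0 ≤ LV := by
    have h := hV _ _ (memP2_dirac (0 : Ed d)) (memP2_dirac v)
    rw [hvW, mul_one] at h
    exact le_trans (abs_nonneg _) h
  -- Step 5 : assemble
  have hW1w : W1 μb νb ≤ w := W1_le_W2 μb νb hμb hνb
  have hwnn : 0 ≤ w := W2_nonneg μb νb
  have hkey : w ^ 2 / ε ≤ (LU + LV) * w := by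
    have hsum : 2 * ((1 / (2 * ε)) * w ^ 2) ≤ (U μb - U νb) + (V μb - V νb) := by
      linarith
    have h2c : 2 * ((1 / (2 * ε)) * w ^ 2) = w ^ 2 / ε := by
      field_simp
    have hmul : (LU + LV) * W1 μb νb ≤ (LU + LV) * w :=
      mul_le_mul_of_nonneg_left hW1w (by linarith)
    calc w ^ 2 / ε = 2 * ((1 / (2 * ε)) * w ^ 2) := h2c.symm
      _ ≤ (U μb - U νb) + (V μb - V νb) := hsum
      _ ≤ LU * W1 μb νb + LV * W1 μb νb := by linarith
      _ = (LU + LV) * W1 μb νb := by ring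
      _ ≤ (LU + LV) * w := hmul
  have hkey' : w ^ 2 ≤ (LU + LV) * w * ε := (div_le_iff₀ hε).mp hkey
  rcases eq_or_lt_of_le hwnn with h0 | h0
  · rw [← h0]
    positivity
  · nlinarith [mul_pos (mul_pos h0 h0) hε]

end
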